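/- Consider the linear program: minimize $3 y_3$ over reals $l_1, l_2, l_3, y_3$ subject to $4 y_3 = l_1 + l_2 + l_3$, $l_1 + 3y_3 \geq 1$, $l_2 + 3y_3 \geq -3$, $l_3 + 3y_3 \geq 3$, $0 \leq y_3 \leq 1$, and $l_1, l_2, l_3 \geq 0$. The optimal value is $9/7$, attained at $(l_1, l_2, l_3, y_3) = (0, 0, 12/7, 3/7)$. -/

import Mathlib

/-- Feasibility for the dual linear program in dimension 4. -/
def Feasible4 (l1 l2 l3 y3 : ℝ) : Prop :=
  4 * y3 = l1 + l2 + l3 ∧ l1 + 3 * y3 ≥ 1 ∧ l2 + 3 * y3 ≥ -3 ∧ l3 + 3 * y3 ≥ 3 ∧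
    0 ≤ y3 ∧ y3 ≤ 1 ∧ 0 ≤ l1 ∧ 0 ≤ l2 ∧ 0 ≤ l3

theorem feasible4_optimal_point : Feasible4 0 0 (12 / 7) (3 / 7) := by
  unfold Feasible4
  norm_num

theorem Feasible4.three_div_seven_le {l1 l2 l3 y3 : ℝ} (h : Feasible4 l1 l2 l3 y3) :
    3 / 7 ≤ y3 := by
  obtain ⟨hsum, -, -, hl3, -, -, hl1, hl2, -⟩ := h
  calc 3 / 7 ≤ (l3 + 3 * y3) / 7 := by gcongr
    _ ≤ (l1 + l2 + l3 + 3 * y3) / 7 := by gcongr; linarith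
    _ = y3 := by rw [← hsum]; ring

theorem lp_dim_four :
    Feasible4 0 0 (12 / 7) (3 / 7) ∧ 3 * (3 / 7 : ℝ) = 9 / 7 ∧
      ∀ l1 l2 l3 y3 : ℝ, Feasible4 l1 l2 l3 y3 → 9 / 7 ≤ 3 * y3 := by
  refine ⟨feasible4_optimal_point, by norm_num, fun l1 l2 l3 y3 h => ?_⟩
  linarith [h.three_div_seven_le]
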